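/- arXiv:math/0310467 — 2 statements merged into one kernel-verified Lean document; each statement's English description precedes it below -/
import Mathlib

section
/- Let n ≥ 3 and let R be a commutative ring. For the polynomial f(z) = z^n + s·z + t over R, the discriminant of f equals (up to sign) (n-1)^(n-1)·s^n − (−n)^n·t^(n-1). -/
/-!
Up to sign, `∏_{i<j} (r_i - r_j)^2 = ∏_i f'(r_i)`, which is the resultant `Res(f, f')`. The
resultant is a polynomial in `s` and `t` with integer coefficients, so it may be computed for the
generic trinomial, whose constant term is nonzero and which splits over an algebraically closed
field. At a root `r` one has `-r f'(r) = (n-1) s r + n t`; as `∏ (-r_i) = t`, this gives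
`t ∏ f'(r_i) = ∏ (n t - (1-n) s r_i)`, the value of the homogenised `f` at `(n t, (1-n) s)`,
and dividing by `t` yields the formula.
-/

open Polynomial Finset

theorem Finset.prod_prod_erase_sub {R ι : Type*} [CommRing R] [Fintype ι] [LinearOrder ι]
    (r : ι → R) :
    ∏ i, ∏ j ∈ univ.erase i, (r i - r j) =
      (-1) ^ (∑ i, #({j | i < j} : Finset ι)) * ∏ i, ∏ j with i < j, (r i - r j) ^ 2 := by
  have herase (i : ι) :
      univ.erase i = ({j | j < i} : Finset ι) ∪ ({j | i < j} : Finset ι) := by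
    ext j; simp [lt_or_lt_iff_ne]
  have hdisj (i : ι) : Disjoint ({j | j < i} : Finset ι) ({j | i < j} : Finset ι) :=
    disjoint_filter.mpr fun j _ h => lt_asymm h
  have hswap : ∏ i, ∏ j with j < i, (r i - r j) = ∏ i, ∏ j with i < j, -(r i - r j) := by
    simp_rw [neg_sub]
    exact prod_comm' (by simp)
  simp_rw [herase, prod_union (hdisj _), prod_mul_distrib, hswap, prod_neg, prod_mul_distrib,
    prod_pow_eq_pow_sum, prod_pow, mul_assoc, sq]

namespace Polynomial

variable {R : Type*} [CommRing R]

theorem eval_homogenize_prod_X_sub_C {ι : Type*} [Fintype ι] (r : ι → R) (a b : R) :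
    MvPolynomial.eval ![b, a] (homogenize (∏ i, (X - C (r i))) (Fintype.card ι)) =
      ∏ i, (b - a * r i) := by
  rw [Fintype.card_eq_sum_ones, homogenize_finsetProd fun i _ => natDegree_X_sub_C_le (r i),
    map_prod]
  simp [mul_comm]

theorem eval_derivative_prod_X_sub_C {ι : Type*} [Fintype ι] [DecidableEq ι] (r : ι → R)
    (i : ι) : (derivative (∏ j, (X - C (r j)))).eval (r i) = ∏ j ∈ univ.erase i, (r i - r j) := by
  rw [derivative_prod_finset, eval_finsetSum, sum_eq_single i]
  · simp [eval_prod]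
  · intro j _ hji
    simp only [derivative_sub, derivative_X, derivative_C, sub_zero, mul_one, eval_prod, eval_sub,
      eval_X, eval_C]
    exact prod_eq_zero (mem_erase.mpr ⟨Ne.symm hji, mem_univ i⟩) (sub_self _)
  · simp

theorem resultant_prod_X_sub_C_left {ι : Type*} [Fintype ι] (r : ι → R) (g : R[X]) {k : ℕ}
    (hg : g.natDegree ≤ k) :
    resultant (∏ i, (X - C (r i))) g (Fintype.card ι) k = ∏ i, g.eval (r i) := by
  nontriviality R
  have := resultant_prod_left univ (fun i => X - C (r i)) g k (by simp) hg
  rw [natDegree_prod_of_monic _ _ fun i _ => monic_X_sub_C (r i)] at this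
  simpa [hg] using this

theorem resultant_prod_X_sub_C_derivative {ι : Type*} [Fintype ι] [LinearOrder ι] (r : ι → R) :
    resultant (∏ i, (X - C (r i))) (derivative (∏ i, (X - C (r i)))) (Fintype.card ι)
        (Fintype.card ι - 1) =
      (-1) ^ (∑ i, #({j | i < j} : Finset ι)) * ∏ i, ∏ j with i < j, (r i - r j) ^ 2 := by
  have hdeg : (derivative (∏ i, (X - C (r i)))).natDegree ≤ Fintype.card ι - 1 := by
    nontriviality R
    refine (natDegree_derivative_le _).trans_eq ?_
    rw [natDegree_prod_of_monic _ _ fun i _ => monic_X_sub_C (r i)]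
    simp
  simp_rw [resultant_prod_X_sub_C_left r _ hdeg, eval_derivative_prod_X_sub_C,
    prod_prod_erase_sub]

theorem eval_homogenize_X_pow_add_C_mul_X_add_C {n : ℕ} (hn : n ≠ 0) (s t a b : R) :
    MvPolynomial.eval ![b, a] (homogenize (X ^ n + C s * X + C t) n) =
      b ^ n + s * b * a ^ (n - 1) + t * a ^ n := by
  simp [hn, mul_assoc]

theorem natDegree_X_pow_add_C_mul_X_add_C [Nontrivial R] {n : ℕ} (hn : 2 ≤ n) (s t : R) :
    (X ^ n + C s * X + C t).natDegree = n := by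
  rw [natDegree_add_C, natDegree_add_eq_left_of_natDegree_lt] <;>
    simp only [natDegree_X_pow]
  exact ((natDegree_C_mul_le s X).trans natDegree_X_le).trans_lt (by omega)

theorem monic_X_pow_add_C_mul_X_add_C {n : ℕ} (hn : 2 ≤ n) (s t : R) :
    (X ^ n + C s * X + C t).Monic := by
  rw [add_assoc]
  refine monic_X_pow_add ((degree_add_le _ _).trans_lt (max_lt ?_ ?_))
  · exact (degree_C_mul_X_le s).trans_lt (by exact_mod_cast (by omega : 1 < n))
  · exact (degree_C_le).trans_lt (by exact_mod_cast (by omega : 0 < n))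

theorem derivative_X_pow_add_C_mul_X_add_C (n : ℕ) (s t : R) :
    derivative (X ^ n + C s * X + C t) = C (n : R) * X ^ (n - 1) + C s := by
  rw [derivative_add, derivative_add, derivative_X_pow, derivative_C_mul_X, derivative_C, add_zero]

theorem natDegree_derivative_X_pow_add_C_mul_X_add_C (n : ℕ) (s t : R) :
    (derivative (X ^ n + C s * X + C t)).natDegree ≤ n - 1 := by
  rw [derivative_X_pow_add_C_mul_X_add_C, natDegree_add_C]
  exact (natDegree_C_mul_le _ _).trans (natDegree_X_pow_le (n - 1))

theorem card_eq_of_X_pow_add_C_mul_X_add_C_eq_prod [Nontrivial R] {ι : Type*} [Fintype ι]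
    {n : ℕ} (hn : 2 ≤ n) {s t : R} {r : ι → R}
    (hr : X ^ n + C s * X + C t = ∏ i, (X - C (r i))) : Fintype.card ι = n := by
  simpa [natDegree_X_pow_add_C_mul_X_add_C hn, natDegree_prod_of_monic, monic_X_sub_C]
    using (congrArg natDegree hr).symm

theorem prod_eval_derivative_X_pow_add_C_mul_X_add_C [IsDomain R] {ι : Type*} [Fintype ι]
    {n : ℕ} (hn : 2 ≤ n) {s t : R} (ht : t ≠ 0) {r : ι → R}
    (hr : X ^ n + C s * X + C t = ∏ i, (X - C (r i))) :
    ∏ i, (derivative (X ^ n + C s * X + C t)).eval (r i) =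
      (-1) ^ (n - 1) * (((n : R) - 1) ^ (n - 1) * s ^ n - (-(n : R)) ^ n * t ^ (n - 1)) := by
  have hcard := card_eq_of_X_pow_add_C_mul_X_add_C_eq_prod hn hr
  have heval (x : R) : x ^ n + s * x + t = ∏ i, (x - r i) := by
    simpa [eval_prod] using congrArg (eval x) hr
  obtain ⟨k, rfl⟩ : ∃ k, n = k + 1 := ⟨n - 1, by omega⟩
  set N : R := ((k + 1 : ℕ) : R)
  have hmul (i : ι) : -r i * (derivative (X ^ (k + 1) + C s * X + C t)).eval (r i) =
      N * t - (1 - N) * s * r i := by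
    have hroot : r i ^ (k + 1) + s * r i + t = 0 :=
      (heval (r i)).trans (prod_eq_zero (mem_univ i) (sub_self _))
    simp only [derivative_X_pow_add_C_mul_X_add_C, Nat.add_sub_cancel, eval_add, eval_mul,
      eval_C, eval_pow, eval_X]
    linear_combination (-N) * hroot
  refine mul_left_cancel₀ ht ?_
  calc t * ∏ i, (derivative (X ^ (k + 1) + C s * X + C t)).eval (r i)
      = ∏ i, (N * t - (1 - N) * s * r i) := by
        rw [← prod_congr rfl fun i _ => hmul i, prod_mul_distrib]
        congr 1
        simpa using heval 0
    _ = MvPolynomial.eval ![N * t, (1 - N) * s]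
          (homogenize (X ^ (k + 1) + C s * X + C t) (k + 1)) := by
        rw [hr, ← hcard, eval_homogenize_prod_X_sub_C]
    _ = _ := by
        have hsign : ((-1 : R) ^ k) ^ 2 = 1 := by rw [← pow_mul, pow_mul', neg_one_sq, one_pow]
        rw [eval_homogenize_X_pow_add_C_mul_X_add_C (by omega), Nat.add_sub_cancel,
          show 1 - N = -1 * (N - 1) by ring, show -N = -1 * N by ring]
        simp only [mul_pow]
        linear_combination (-(N * N ^ k * t * t ^ k)) * hsign

theorem resultant_derivative_X_pow_add_C_mul_X_add_C_of_eq_prod [IsDomain R] {ι : Type*}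
    [Fintype ι] {n : ℕ} (hn : 2 ≤ n) {s t : R} (ht : t ≠ 0) {r : ι → R}
    (hr : X ^ n + C s * X + C t = ∏ i, (X - C (r i))) :
    resultant (X ^ n + C s * X + C t) (derivative (X ^ n + C s * X + C t)) n (n - 1) =
      (-1) ^ (n - 1) * (((n : R) - 1) ^ (n - 1) * s ^ n - (-(n : R)) ^ n * t ^ (n - 1)) := by
  have := resultant_prod_X_sub_C_left r _ (natDegree_derivative_X_pow_add_C_mul_X_add_C n s t)
  rw [← hr, card_eq_of_X_pow_add_C_mul_X_add_C_eq_prod hn hr] at this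
  rw [this, prod_eval_derivative_X_pow_add_C_mul_X_add_C hn ht hr]

theorem resultant_derivative_X_pow_add_C_mul_X_add_C_of_ne_zero [IsDomain R] {n : ℕ} (hn : 2 ≤ n)
    (s : R) {t : R} (ht : t ≠ 0) :
    resultant (X ^ n + C s * X + C t) (derivative (X ^ n + C s * X + C t)) n (n - 1) =
      (-1) ^ (n - 1) * (((n : R) - 1) ^ (n - 1) * s ^ n - (-(n : R)) ^ n * t ^ (n - 1)) := by
  classical
  let K := AlgebraicClosure (FractionRing R)
  have hinj : Function.Injective (algebraMap R K) := by
    rw [IsScalarTower.algebraMap_eq R (FractionRing R) K]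
    exact (algebraMap (FractionRing R) K).injective.comp (IsFractionRing.injective R _)
  apply hinj
  set f : K[X] := X ^ n + C (algebraMap R K s) * X + C (algebraMap R K t)
  have hf : f = ∏ x : f.roots, (X - C (x : K)) := by
    refine ((IsAlgClosed.splits f).eq_prod_roots_of_monic ?_).trans
      (congrArg Multiset.prod (Multiset.map_univ _ _).symm)
    exact monic_X_pow_add_C_mul_X_add_C hn _ _
  have := resultant_derivative_X_pow_add_C_mul_X_add_C_of_eq_prod hn
    ((map_ne_zero_iff (algebraMap R K) hinj).mpr ht) hf
  have hmap : (X ^ n + C s * X + C t).map (algebraMap R K) = f := by simp [f]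
  rw [← resultant_map_map, ← derivative_map, hmap, this]
  simp

theorem resultant_derivative_X_pow_add_C_mul_X_add_C {n : ℕ} (hn : 2 ≤ n) (s t : R) :
    resultant (X ^ n + C s * X + C t) (derivative (X ^ n + C s * X + C t)) n (n - 1) =
      (-1) ^ (n - 1) * (((n : R) - 1) ^ (n - 1) * s ^ n - (-(n : R)) ^ n * t ^ (n - 1)) := by
  have := congrArg (MvPolynomial.aeval ![s, t]).toRingHom <|
    resultant_derivative_X_pow_add_C_mul_X_add_C_of_ne_zero hn (.X 0)
      (MvPolynomial.X_ne_zero (R := ℤ) (1 : Fin 2))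
  have hmap : (X ^ n + C (MvPolynomial.X 0) * X + C (MvPolynomial.X 1) :
      (MvPolynomial (Fin 2) ℤ)[X]).map (MvPolynomial.aeval ![s, t]).toRingHom =
      X ^ n + C s * X + C t := by
    simp
  rw [← resultant_map_map, ← derivative_map, hmap] at this
  simpa using this

end Polynomial

theorem discriminant_of_bring_jerrard_general (R : Type*) [CommRing R]
    (n : ℕ) (hn : 3 ≤ n) (s t : R) (r : Fin n → R)
    (hroots : (X ^ n + C s * X + C t : R[X]) = ∏ i : Fin n, (X - C (r i))) :
    ∃ ε : R, (ε = 1 ∨ ε = -1) ∧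
      (∏ i : Fin n, ∏ j ∈ Finset.univ.filter (fun j => i < j), (r i - r j) ^ 2)
        = ε * (((n : R) - 1) ^ (n - 1) * s ^ n - (-(n : R)) ^ n * t ^ (n - 1)) := by
  set N := ∑ i : Fin n, #({j | i < j} : Finset (Fin n))
  refine ⟨(-1) ^ (N + (n - 1)), neg_one_pow_eq_or R _, ?_⟩
  have hres := resultant_prod_X_sub_C_derivative r
  rw [← hroots, Fintype.card_fin, resultant_derivative_X_pow_add_C_mul_X_add_C (by omega)] at hres
  have hsq : ((-1 : R) ^ N) ^ 2 = 1 := by rw [← pow_mul, pow_mul', neg_one_sq, one_pow]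
  rw [pow_add]
  linear_combination (-(-1) ^ N) * hres - (∏ i, ∏ j with i < j, (r i - r j) ^ 2) * hsq

/-- For `f(z) = z^n + s z + t` (n ≥ 3) over a commutative ring, the discriminant of `f`
(computed as `∏_{i<j} (r_i - r_j)^2` for the roots `r_i` of `f`) equals, up to sign,
`(n-1)^(n-1) s^n − (−n)^n t^(n-1)`. -/
theorem discriminant_of_bring_jerrard (R : Type*) [CommRing R] [IsDomain R]
    (n : ℕ) (hn : 3 ≤ n) (s t : R) (r : Fin n → R)
    (hroots : (X ^ n + C s * X + C t : R[X]) = ∏ i : Fin n, (X - C (r i))) :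
    ∃ ε : R, (ε = 1 ∨ ε = -1) ∧
      (∏ i : Fin n, ∏ j ∈ Finset.univ.filter (fun j => i < j), (r i - r j) ^ 2)
        = ε * (((n : R) - 1) ^ (n - 1) * s ^ n - (-(n : R)) ^ n * t ^ (n - 1)) :=
  discriminant_of_bring_jerrard_general R n hn s t r hroots
end

section
/- Let R = k[[x]] with char k coprime to 2, let f(w) = w²·e + e₁·w + e₀ be a polynomial in w over R where e is a unit, and suppose there is m ≥ 2 with e₀/x^m, e₁/x^m units of R and m odd. Then the local ring obtained from R[w]/(f(w)) by adjoining y = w·e/c₀ with c₀ = x^{(m-1)/2} is regular at the point x = w = 0; i.e., adjoining w·e/c₀ normalizes the double-point singularity of w²e + e₁w + e₀ = 0. -/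
set_option maxHeartbeats 1000000


/-- Let `R = k[[x]]` with `char k ≠ 2`, and let `α` generate a quadratic extension of
`Frac(R)` with `e·α² + e₁·α + e₀ = 0`, where `e` is a unit of `R` and
`e₀, e₁ ∈ x^m·Rˣ` with `m ≥ 2` odd. Then adjoining `β = α·e/c₀` with
`c₀ = x^{(m−1)/2}` normalizes the double point: `R[α, β]` is the integral closure
of `R` in the quadratic extension (in particular it is normal/regular). -/
theorem adjoining_beta_normalizes_double_point
    (k : Type*) [Field k] (hchar2 : (2 : k) ≠ 0)
    (e : (PowerSeries k)ˣ) (e₀ e₁ : PowerSeries k) (m : ℕ)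
    (hm2 : 2 ≤ m) (hmodd : Odd m)
    (u₀ u₁ : (PowerSeries k)ˣ)
    (he₀ : e₀ = PowerSeries.X ^ m * (u₀ : PowerSeries k))
    (he₁ : e₁ = PowerSeries.X ^ m * (u₁ : PowerSeries k))
    (K L : Type*) [Field K] [Field L] [Algebra (PowerSeries k) K]
    [IsFractionRing (PowerSeries k) K] [Algebra K L] [Algebra (PowerSeries k) L]
    [IsScalarTower (PowerSeries k) K L]
    (hdeg : Module.finrank K L = 2)
    (α : L)
    (hroot : algebraMap (PowerSeries k) L (e : PowerSeries k) * α ^ 2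
        + algebraMap (PowerSeries k) L e₁ * α + algebraMap (PowerSeries k) L e₀ = 0)
    (hgen : Algebra.adjoin K {α} = ⊤) :
    letI β : L := algebraMap (PowerSeries k) L (e : PowerSeries k) * α
        / algebraMap (PowerSeries k) L (PowerSeries.X ^ ((m - 1) / 2))
    Algebra.adjoin (PowerSeries k) {α, β} = integralClosure (PowerSeries k) L := by
  classical
  obtain ⟨n, hn⟩ : ∃ n, m = 2 * n + 1 := by
    obtain ⟨n, hn⟩ := hmodd; exact ⟨n, by omega⟩
  have hmn : (m - 1) / 2 = n := by omega
  have hinjK : Function.Injective (algebraMap (PowerSeries k) K) := IsFractionRing.injective (PowerSeries k) K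
  have hinjL : Function.Injective (algebraMap (PowerSeries k) L) := by
    rw [IsScalarTower.algebraMap_eq (PowerSeries k) K L]
    exact (algebraMap K L).injective.comp hinjK
  have : NoZeroSMulDivisors (PowerSeries k) L := ⟨fun {c x} h => by
    rw [Algebra.smul_def, mul_eq_zero] at h; exact h.imp (fun h => hinjL (by rw [h, map_zero])) id⟩
  have h2R : (2 : (PowerSeries k)) ≠ 0 := by
    intro h
    have := congrArg (PowerSeries.constantCoeff (R := k)) h
    rw [map_ofNat, map_zero] at this
    exact hchar2 this
  have h2K : (2 : K) ≠ 0 := by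
    intro h
    apply h2R
    apply hinjK
    rw [map_ofNat, map_zero]
    exact h
  have hX0 : (PowerSeries.X : (PowerSeries k)) ≠ 0 := PowerSeries.X_ne_zero
  have hXn0 : (PowerSeries.X : (PowerSeries k)) ^ n ≠ 0 := pow_ne_zero _ hX0
  have hAXn : algebraMap (PowerSeries k) L (PowerSeries.X ^ n) ≠ 0 := fun h => hXn0 (hinjL (by simpa using h))
  have hAe : algebraMap (PowerSeries k) L (e : (PowerSeries k)) ≠ 0 := fun h => e.ne_zero (hinjL (by simpa using h))
  -- the element β
  set β : L := algebraMap (PowerSeries k) L (e : (PowerSeries k)) * α / algebraMap (PowerSeries k) L (PowerSeries.X ^ ((m - 1) / 2)) with hβdef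
  have hβ : β = algebraMap (PowerSeries k) L (e : (PowerSeries k)) * α / algebraMap (PowerSeries k) L (PowerSeries.X ^ n) := by rw [hβdef, hmn]
  have hβmul : algebraMap (PowerSeries k) L (PowerSeries.X ^ n) * β = algebraMap (PowerSeries k) L (e : (PowerSeries k)) * α := by
    rw [hβ, mul_div_cancel₀ _ hAXn]
  -- the monic quadratic equation satisfied by β
  have key : β ^ 2 + algebraMap (PowerSeries k) L (PowerSeries.X ^ (n + 1) * (u₁ : (PowerSeries k))) * β
      + algebraMap (PowerSeries k) L (PowerSeries.X * (u₀ : (PowerSeries k)) * (e : (PowerSeries k))) = 0 := by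
    apply mul_left_cancel₀ (pow_ne_zero 2 hAXn)
    rw [mul_zero]
    have hroot2 := hroot
    have hβmul2 := hβmul
    rw [he₀, he₁, hn] at hroot2
    simp only [map_mul, map_pow] at hroot2 hβmul2 ⊢
    linear_combination (algebraMap (PowerSeries k) L PowerSeries.X ^ n * β + algebraMap (PowerSeries k) L (e : (PowerSeries k)) * α
      + algebraMap (PowerSeries k) L PowerSeries.X ^ (2 * n + 1) * algebraMap (PowerSeries k) L (u₁ : (PowerSeries k))) * hβmul2 + algebraMap (PowerSeries k) L (e : (PowerSeries k)) * hroot2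
  -- the polynomial q
  set b : (PowerSeries k) := PowerSeries.X ^ (n + 1) * (u₁ : (PowerSeries k)) with hb
  set c : (PowerSeries k) := PowerSeries.X * (u₀ : (PowerSeries k)) * (e : (PowerSeries k)) with hc
  set q : Polynomial (PowerSeries k) := Polynomial.X ^ 2 + Polynomial.C b * Polynomial.X + Polynomial.C c
    with hq
  have hqmonic : q.Monic := by
    unfold q
    monicity!
  have hqdeg : q.natDegree = 2 := by
    unfold q
    compute_degree!
  have hqcoeff0 : q.coeff 0 = c := by
    simp [hq, Polynomial.coeff_X_pow]
  have hqcoeff1 : q.coeff 1 = b := by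
    simp [hq, Polynomial.coeff_X_pow]
  have hqaeval : Polynomial.aeval β q = 0 := by
    simp only [hq, map_add, map_mul, map_pow, Polynomial.aeval_X, Polynomial.aeval_C]
    exact key
  have hβint : IsIntegral (PowerSeries k) β := ⟨q, hqmonic, by rw [← Polynomial.aeval_def]; exact hqaeval⟩
  -- α is in the integral closure
  have heαint : IsIntegral (PowerSeries k) (algebraMap (PowerSeries k) L (e : (PowerSeries k)) * α) := by
    refine ⟨Polynomial.X ^ 2 + Polynomial.C e₁ * Polynomial.X + Polynomial.C (e₀ * (e : (PowerSeries k))),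
      ?_, ?_⟩
    · monicity!
    · simp only [Polynomial.eval₂_add, Polynomial.eval₂_mul, Polynomial.eval₂_pow,
        Polynomial.eval₂_X, Polynomial.eval₂_C, map_mul]
      linear_combination algebraMap (PowerSeries k) L (e : (PowerSeries k)) * hroot
  have hαmem : α ∈ integralClosure (PowerSeries k) L := by
    have h1 : algebraMap (PowerSeries k) L (e : (PowerSeries k)) * α ∈ integralClosure (PowerSeries k) L := heαint
    have h2 : α = algebraMap (PowerSeries k) L ((e⁻¹ : (PowerSeries k)ˣ) : (PowerSeries k)) * (algebraMap (PowerSeries k) L (e : (PowerSeries k)) * α) := by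
      rw [← mul_assoc, ← map_mul]
      simp
    rw [h2]
    exact mul_mem (Subalgebra.algebraMap_mem _ _) h1
  have hβmem : β ∈ integralClosure (PowerSeries k) L := hβint
  -- β generates L over K
  have hβK : IsIntegral K β := hβint.tower_top
  have hadjβ : Algebra.adjoin K {β} = ⊤ := by
    rw [eq_top_iff, ← hgen]
    apply Algebra.adjoin_le
    rw [Set.singleton_subset_iff, SetLike.mem_coe]
    have hα : α = algebraMap K L (algebraMap (PowerSeries k) K (PowerSeries.X ^ n) / algebraMap (PowerSeries k) K (e : (PowerSeries k))) * β := by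
      rw [map_div₀, ← IsScalarTower.algebraMap_apply, ← IsScalarTower.algebraMap_apply,
        hβ]
      field_simp
    rw [hα]
    exact Subalgebra.mul_mem _ (Subalgebra.algebraMap_mem _ _)
      (Algebra.self_mem_adjoin_singleton K β)
  -- power basis generated by β
  set B : PowerBasis K L := (Algebra.adjoin.powerBasis hβK).map
    ((Subalgebra.equivOfEq _ _ hadjβ).trans Subalgebra.topEquiv) with hB
  have hBgen : B.gen = β := rfl
  have hBdim : B.dim = (minpoly K β).natDegree := rfl
  have hmKdeg : (minpoly K β).natDegree = 2 := by
    rw [← hBdim, ← B.finrank, hdeg]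
  -- separability
  have hfd : FiniteDimensional K L := FiniteDimensional.of_finrank_eq_succ hdeg
  have hsep : Algebra.IsSeparable K L := by
    constructor
    intro x
    have hxi : IsIntegral K x := IsIntegral.of_finite K x
    have hirr := minpoly.irreducible hxi
    show (minpoly K x).Separable
    rw [Polynomial.separable_iff_derivative_ne_zero hirr]
    intro h0
    obtain ⟨d, hdeq⟩ : ∃ d', (minpoly K x).natDegree = d' + 1 :=
      ⟨(minpoly K x).natDegree - 1, by have := minpoly.natDegree_pos hxi; omega⟩
    have hd2 : (minpoly K x).natDegree ≤ 2 := hdeg ▸ minpoly.natDegree_le x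
    have hd2' : d ≤ 1 := by omega
    have hcoe : (Polynomial.derivative (minpoly K x)).coeff d
        = (minpoly K x).coeff (d + 1) * ((d : K) + 1) := by
      rw [Polynomial.coeff_derivative]
      try push_cast
      try ring
    rw [h0, Polynomial.coeff_zero] at hcoe
    rw [← hdeq, Polynomial.Monic.coeff_natDegree (minpoly.monic hxi), one_mul] at hcoe
    interval_cases d
    · exact (one_ne_zero : (1 : K) ≠ 0) (by linear_combination (norm := (push_cast; ring1)) -hcoe)
    · exact h2K (by linear_combination (norm := (push_cast; ring1)) -hcoe)
  -- the minimal polynomial of β over (PowerSeries k) is q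
  have hmRβ : minpoly (PowerSeries k) β = q := by
    have hdvd : minpoly (PowerSeries k) β ∣ q := minpoly.isIntegrallyClosed_dvd hβint hqaeval
    have hfrac : minpoly K β = (minpoly (PowerSeries k) β).map (algebraMap (PowerSeries k) K) := by
      have := minpoly.isIntegrallyClosed_eq_field_fractions K L (S := L)
        (s := β) hβint
      simpa using this
    have hmRdeg : (minpoly (PowerSeries k) β).natDegree = 2 := by
      have := hmKdeg
      rw [hfrac, Polynomial.natDegree_map_eq_of_injective hinjK] at this
      exact this
    exact (Polynomial.eq_of_monic_of_dvd_of_natDegree_le (minpoly.monic hβint) hqmonic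
      hdvd (by rw [hqdeg, hmRdeg])).symm
  -- Eisenstein at (X)
  have hei : q.IsEisensteinAt (Submodule.span (PowerSeries k) {PowerSeries.X}) := by
    constructor
    · rw [hqmonic.leadingCoeff]
      rw [Ideal.submodule_span_eq, Ideal.mem_span_singleton]
      intro h
      exact PowerSeries.X_prime.not_unit (isUnit_of_dvd_one h)
    · intro i hi
      rw [hqdeg] at hi
      rw [Ideal.submodule_span_eq, Ideal.mem_span_singleton]
      interval_cases i
      · rw [hqcoeff0, hc]; exact ⟨(u₀ : (PowerSeries k)) * (e : (PowerSeries k)), by ring⟩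
      · rw [hqcoeff1, hb]; exact Dvd.dvd.mul_right ⟨PowerSeries.X ^ n, by ring⟩ _
    · rw [hqcoeff0, Ideal.submodule_span_eq, Ideal.span_singleton_pow,
        Ideal.mem_span_singleton]
      intro h
      obtain ⟨r, hr⟩ := h
      have : (u₀ : (PowerSeries k)) * (e : (PowerSeries k)) = PowerSeries.X * r := by
        apply mul_left_cancel₀ hX0
        calc PowerSeries.X * ((u₀ : (PowerSeries k)) * (e : (PowerSeries k))) = c := by rw [hc]; ring
          _ = PowerSeries.X ^ 2 * r := hr
          _ = PowerSeries.X * (PowerSeries.X * r) := by ring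
      exact PowerSeries.X_prime.not_unit
        (isUnit_of_dvd_unit ⟨r, this⟩ ((u₀.isUnit).mul (e.isUnit)))
  -- conclude
  apply le_antisymm
  · apply Algebra.adjoin_le
    rintro x (rfl | rfl)
    · exact hαmem
    · exact hβmem
  · intro z hz
    have hzint : IsIntegral (PowerSeries k) z := hz
    suffices hzb : z ∈ Algebra.adjoin (PowerSeries k) {β} by
      exact Algebra.adjoin_mono (Set.singleton_subset_iff.mpr (by simp)) hzb
    obtain ⟨d, hd⟩ := IsLocalization.exist_integer_multiples (nonZeroDivisors (PowerSeries k))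
      Finset.univ (fun i : Fin B.dim => B.basis.repr z i)
    have hdz : (d : (PowerSeries k)) • z ∈ Algebra.adjoin (PowerSeries k) {β} := by
      rw [← B.basis.sum_repr z, Finset.smul_sum]
      apply Subalgebra.sum_mem
      intro i _
      obtain ⟨r, hr⟩ := hd i (Finset.mem_univ i)
      rw [B.basis_eq_pow i, ← smul_assoc]
      rw [show ((d : (PowerSeries k)) • B.basis.repr z i) = algebraMap (PowerSeries k) K r from hr.symm]
      rw [algebraMap_smul]
      exact Subalgebra.smul_mem _ (Subalgebra.pow_mem _ (hBgen ▸ Algebra.self_mem_adjoin_singleton (PowerSeries k) β) _) r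
    obtain ⟨nn, v, hv⟩ := IsDiscreteValuationRing.associated_pow_irreducible
      (nonZeroDivisors.ne_zero d.2) PowerSeries.X_irreducible
    have hXz : (PowerSeries.X : (PowerSeries k)) ^ nn • z ∈ Algebra.adjoin (PowerSeries k) {β} := by
      rw [← hv, mul_comm, mul_smul]
      exact Subalgebra.smul_mem _ hdz (v : (PowerSeries k))
    have := mem_adjoin_of_smul_prime_pow_smul_of_minpoly_isEisensteinAt
      (B := B) PowerSeries.X_prime (hBgen ▸ hβint) hzint
      (by rw [hBgen]; exact hXz) (by rw [hBgen, hmRβ]; exact hei)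
    rw [hBgen] at this
    exact this
end
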